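/- Let E and F be complex Hilbert spaces with E separable, let A : E → F be a Hilbert–Schmidt operator, and let (e_i)_{i ∈ I} be a Hilbert (orthonormal) basis of E consisting of eigenvectors of the positive trace-class operator A*A, with A*A e_i = a_i²·e_i (a_i ≥ 0). Then (Id_E + A*A)^{1/2} − Id_E (square root via the continuous functional calculus) is a trace-class operator on E and Tr((Id_E + A*A)^{1/2} − Id_E) = Σ_{i ∈ I} (√(1 + a_i²) − 1), the family on the right-hand side being summable. -/

import Mathlib

noncomputable section
namespace Paper
open ContinuousLinearMap

variable {E F : Type*}
  [NormedAddCommGroup E] [InnerProductSpace ℂ E] [CompleteSpace E]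
  [NormedAddCommGroup F] [InnerProductSpace ℂ F] [CompleteSpace F]

/-- `A` is a Hilbert–Schmidt operator: for every (equivalently some) Hilbert basis
the squared norms of the images of basis vectors are summable. -/
def IsHS (A : E →L[ℂ] F) : Prop :=
  ∀ (s : Set E) (b : HilbertBasis s ℂ E), Summable fun i => ‖A (b i)‖ ^ 2

/-- `A` is a trace-class operator: it factors as a composition of two
Hilbert–Schmidt operators. -/
def IsTC (A : E →L[ℂ] F) : Prop :=
  ∃ (B : E →L[ℂ] F) (C : E →L[ℂ] E), IsHS B ∧ IsHS C ∧ A = B ∘L C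


/-- The real continuous functional calculus `f(a)` for (self-adjoint) bounded
operators on a complex Hilbert space. -/
def cfcR (f : ℝ → ℝ) (a : E →L[ℂ] E) : E →L[ℂ] E :=
  letI i1 := IsStarNormal.instContinuousFunctionalCalculus (A := E →L[ℂ] E)
  letI i2 := IsSelfAdjoint.instContinuousFunctionalCalculus (A := E →L[ℂ] E)
  cfc f a

/-- Index set of a chosen Hilbert basis of `E`. -/
def basisIndex (E : Type*) [NormedAddCommGroup E] [InnerProductSpace ℂ E] [CompleteSpace E] :
    Set E :=
  (exists_hilbertBasis ℂ E).choose

/-- A chosen Hilbert basis of `E`. -/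
def stdHB (E : Type*) [NormedAddCommGroup E] [InnerProductSpace ℂ E] [CompleteSpace E] :
    HilbertBasis (basisIndex E) ℂ E :=
  (exists_hilbertBasis ℂ E).choose_spec.choose

/-- The trace of an operator (junk value if not trace class); for trace-class
operators this is independent of the chosen Hilbert basis. -/
def trace (A : E →L[ℂ] E) : ℂ :=
  ∑' i : basisIndex E, (inner ℂ ((stdHB E) i) (A ((stdHB E) i)) : ℂ)

/-- The Hilbert–Schmidt norm (junk value if not Hilbert–Schmidt). -/
def hsNorm (A : E →L[ℂ] F) : ℝ :=
  Real.sqrt (∑' i : basisIndex E, ‖A ((stdHB E) i)‖ ^ 2)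

/-- The trace norm `Tr √(A*A)` (junk value if not trace class), the square root
being given by the continuous functional calculus. -/
def traceNorm (A : E →L[ℂ] F) : ℝ :=
  (trace (cfc Real.sqrt (adjoint A ∘L A))).re

end Paper

noncomputable section
open scoped ENNReal NNReal
namespace S19
open ContinuousLinearMap

variable {ι : Type*}

lemma two_toReal : (2 : ℝ≥0∞).toReal = 2 := by simp

lemma summable_sq_of_lp (g : lp (fun _ : ι => ℂ) 2) : Summable fun i => ‖g i‖ ^ 2 := by
  have := lp.memℓp g
  rw [memℓp_gen_iff (by norm_num : 0 < (2:ℝ≥0∞).toReal)] at this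
  simpa [two_toReal, Real.rpow_natCast] using this

lemma memℓp_mul (t : ι → ℂ) {C : ℝ} (ht : ∀ i, ‖t i‖ ≤ C) (g : lp (fun _ : ι => ℂ) 2) :
    Memℓp (fun i => t i * g i) 2 := by
  apply memℓp_gen
  rw [two_toReal]
  have hsum := (summable_sq_of_lp g).mul_left (C ^ 2)
  apply Summable.of_nonneg_of_le (fun i => by positivity) (fun i => ?_) hsum
  have h0 : (0:ℝ) ≤ C := le_trans (norm_nonneg _) (ht i)
  calc ‖t i * g i‖ ^ (2:ℝ) = (‖t i‖ * ‖g i‖) ^ 2 := by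
        rw [show (2:ℝ) = ((2:ℕ):ℝ) by norm_num, Real.rpow_natCast]; norm_num [norm_mul]
    _ ≤ (C * ‖g i‖) ^ 2 := by
        apply pow_le_pow_left₀ (by positivity)
        exact mul_le_mul_of_nonneg_right (ht i) (norm_nonneg _)
    _ = C ^ 2 * ‖g i‖ ^ 2 := by ring

def mulOpAux (t : ι → ℂ) {C : ℝ} (ht : ∀ i, ‖t i‖ ≤ C) :
    lp (fun _ : ι => ℂ) 2 →ₗ[ℂ] lp (fun _ : ι => ℂ) 2 where
  toFun g := ⟨fun i => t i * g i, memℓp_mul t ht g⟩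
  map_add' g h := by ext i; simp [mul_add]; rfl
  map_smul' c g := by ext i; simp [lp.coeFn_smul]; ring

@[simp] lemma mulOpAux_apply (t : ι → ℂ) {C : ℝ} (ht : ∀ i, ‖t i‖ ≤ C)
    (g : lp (fun _ : ι => ℂ) 2) (i : ι) : (mulOpAux t ht g : ∀ _ : ι, ℂ) i = t i * g i := rfl

lemma norm_sq_lp (g : lp (fun _ : ι => ℂ) 2) : ‖g‖ ^ 2 = ∑' i, ‖g i‖ ^ 2 := by
  have := lp.norm_rpow_eq_tsum (by norm_num : 0 < (2:ℝ≥0∞).toReal) g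
  rw [two_toReal] at this
  simpa [Real.rpow_natCast] using this

lemma mulOpAux_norm (t : ι → ℂ) {C : ℝ} (hC : 0 ≤ C) (ht : ∀ i, ‖t i‖ ≤ C)
    (g : lp (fun _ : ι => ℂ) 2) : ‖mulOpAux t ht g‖ ≤ C * ‖g‖ := by
  have h2 : ‖mulOpAux t ht g‖ ^ 2 ≤ (C * ‖g‖) ^ 2 := by
    rw [norm_sq_lp, mul_pow, norm_sq_lp, ← tsum_mul_left]
    apply Summable.tsum_le_tsum ?_ ?_ ((summable_sq_of_lp g).mul_left _)
    · intro i
      simp only [mulOpAux_apply, norm_mul, mul_pow]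
      exact mul_le_mul_of_nonneg_right (pow_le_pow_left₀ (norm_nonneg _) (ht i) 2)
        (by positivity)
    · exact ((summable_sq_of_lp g).mul_left (C^2)).of_nonneg_of_le
        (fun i => by positivity) (fun i => by
          simp only [mulOpAux_apply, norm_mul, mul_pow]
          exact mul_le_mul_of_nonneg_right (pow_le_pow_left₀ (norm_nonneg _) (ht i) 2)
            (by positivity))
  have := Real.sqrt_le_sqrt h2
  rwa [Real.sqrt_sq (norm_nonneg _), Real.sqrt_sq (by positivity)] at this

def mulOp (t : ι → ℂ) {C : ℝ} (hC : 0 ≤ C) (ht : ∀ i, ‖t i‖ ≤ C) :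
    lp (fun _ : ι => ℂ) 2 →L[ℂ] lp (fun _ : ι => ℂ) 2 :=
  LinearMap.mkContinuous (mulOpAux t ht) C (mulOpAux_norm t hC ht)

@[simp] lemma mulOp_apply (t : ι → ℂ) {C : ℝ} (hC : 0 ≤ C) (ht : ∀ i, ‖t i‖ ≤ C)
    (g : lp (fun _ : ι => ℂ) 2) (i : ι) : (mulOp t hC ht g : ∀ _ : ι, ℂ) i = t i * g i := rfl


section diag
open scoped ComplexConjugate
variable {E : Type*} [NormedAddCommGroup E] [InnerProductSpace ℂ E] [CompleteSpace E]
variable (b : HilbertBasis ι ℂ E) (t : ι → ℝ) {C : ℝ}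

def diag (hC : 0 ≤ C) (ht : ∀ i, |t i| ≤ C) : E →L[ℂ] E :=
  (b.repr.symm.toContinuousLinearEquiv.toContinuousLinearMap ∘L
    mulOp (fun i => (t i : ℂ)) hC (fun i => by simpa using ht i)) ∘L
    b.repr.toContinuousLinearEquiv.toContinuousLinearMap

variable (hC : 0 ≤ C) (ht : ∀ i, |t i| ≤ C)

lemma repr_diag (x : E) (i : ι) :
    b.repr (diag b t hC ht x) i = t i * b.repr x i := by
  simp [diag, mulOp, mulOpAux, LinearMap.mkContinuous_apply]

lemma diag_apply_basis (i : ι) : diag b t hC ht (b i) = ((t i : ℂ)) • b i := by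
  classical
  apply b.repr.injective
  ext j
  rw [map_smul, lp.coeFn_smul, Pi.smul_apply]
  rw [repr_diag]
  rcases eq_or_ne j i with rfl | hj
  · simp [lp.single_apply_self, smul_eq_mul, mul_comm]
  · simp [HilbertBasis.repr_self, lp.single_apply_ne _ _ _ hj, Pi.single_eq_of_ne hj]

lemma ext_basis {f g : E →L[ℂ] E} (h : ∀ i, f (b i) = g (b i)) : f = g := by
  have hd : Dense (Submodule.span ℂ (Set.range ⇑b) : Set E) :=
    Submodule.dense_iff_topologicalClosure_eq_top.mpr b.dense_span
  exact ContinuousLinearMap.ext_on hd (by rintro x ⟨i, rfl⟩; exact h i)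

lemma conj_mul_real (z : ℂ) (r : ℝ) : conj z * ((r : ℂ) * z) = ((r * ‖z‖ ^ 2 : ℝ) : ℂ) := by
  have : conj z * z = ((‖z‖ : ℂ)) ^ 2 := by
    rw [mul_comm, Complex.mul_conj']
  push_cast
  calc conj z * ((r:ℂ) * z) = (r:ℂ) * (conj z * z) := by ring
    _ = (r:ℂ) * ((‖z‖ : ℂ)) ^ 2 := by rw [this]
    _ = _ := by push_cast; ring

include ht in
lemma summable_weights (x : lp (fun _ : ι => ℂ) 2) :
    Summable fun i => t i * ‖x i‖ ^ 2 := by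
  apply Summable.of_norm_bounded ((summable_sq_of_lp x).mul_left C)
  intro i
  rw [norm_mul, Real.norm_eq_abs, Real.norm_eq_abs, abs_of_nonneg (by positivity : (0:ℝ) ≤ ‖x i‖^2)]
  exact mul_le_mul_of_nonneg_right (ht i) (by positivity)

lemma inner_diag_self (x : E) :
    (inner ℂ x (diag b t hC ht x) : ℂ) = ((∑' i, t i * ‖b.repr x i‖ ^ 2 : ℝ) : ℂ) := by
  have h1 : (inner ℂ x (diag b t hC ht x) : ℂ)
      = inner (𝕜 := ℂ) (b.repr x) (b.repr (diag b t hC ht x)) :=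
    (b.repr.inner_map_map x _).symm
  rw [h1, lp.inner_eq_tsum]
  have h2 : ∀ i, (inner ℂ ((b.repr x) i) ((b.repr (diag b t hC ht x)) i) : ℂ)
      = (((t i * ‖b.repr x i‖ ^ 2 : ℝ)) : ℂ) := by
    intro i
    rw [RCLike.inner_apply, repr_diag, mul_comm, conj_mul_real]
  rw [tsum_congr h2, ← Complex.ofReal_tsum]

lemma norm_diag_sq (x : E) :
    ‖diag b t hC ht x‖ ^ 2 = ∑' i, (t i) ^ 2 * ‖b.repr x i‖ ^ 2 := by
  rw [← b.repr.norm_map (diag b t hC ht x), norm_sq_lp]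
  refine tsum_congr fun i => ?_
  rw [repr_diag, norm_mul, mul_pow, Complex.norm_real, Real.norm_eq_abs, sq_abs]

lemma isSelfAdjoint_diag : IsSelfAdjoint (diag b t hC ht) := by
  rw [ContinuousLinearMap.isSelfAdjoint_iff_isSymmetric]
  intro x y
  simp only [ContinuousLinearMap.coe_coe]
  have hx : (inner ℂ (diag b t hC ht x) y : ℂ)
      = inner (𝕜 := ℂ) (b.repr (diag b t hC ht x)) (b.repr y) :=
    (b.repr.inner_map_map _ y).symm
  have hy : (inner ℂ x (diag b t hC ht y) : ℂ)
      = inner (𝕜 := ℂ) (b.repr x) (b.repr (diag b t hC ht y)) :=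
    (b.repr.inner_map_map x _).symm
  rw [hx, hy, lp.inner_eq_tsum, lp.inner_eq_tsum]
  refine tsum_congr fun i => ?_
  rw [RCLike.inner_apply, RCLike.inner_apply, repr_diag, repr_diag, map_mul,
    Complex.conj_ofReal]
  ring

lemma nonneg_diag (h0 : ∀ i, 0 ≤ t i) : (0 : E →L[ℂ] E) ≤ diag b t hC ht := by
  rw [ContinuousLinearMap.nonneg_iff_isPositive]
  refine ⟨ContinuousLinearMap.isSelfAdjoint_iff_isSymmetric.mp (isSelfAdjoint_diag b t hC ht), fun x => ?_⟩
  have : (inner ℂ (diag b t hC ht x) x : ℂ) = ((∑' i, t i * ‖b.repr x i‖ ^ 2 : ℝ) : ℂ) := by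
    rw [← inner_conj_symm, inner_diag_self, Complex.conj_ofReal]
  have h2 : (0:ℝ) ≤ ∑' i, t i * ‖b.repr x i‖ ^ 2 :=
    tsum_nonneg fun i => mul_nonneg (h0 i) (by positivity)
  unfold ContinuousLinearMap.reApplyInnerSelf
  rw [this]
  simpa using h2

end diag

section core
variable {E : Type*} [NormedAddCommGroup E] [InnerProductSpace ℂ E] [CompleteSpace E]
variable {κ : Type*}

lemma tsum_parseval (β : HilbertBasis κ ℂ E) (x : E) :
    ∑' j, ‖β.repr x j‖ ^ 2 = ‖x‖ ^ 2 := by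
  rw [← norm_sq_lp (β.repr x), β.repr.norm_map]

lemma core (b : HilbertBasis ι ℂ E) (β : HilbertBasis κ ℂ E) (t : ι → ℝ)
    (h0 : ∀ i, 0 ≤ t i) (hsum : Summable t) :
    Summable (fun j => ∑' i, t i * ‖b.repr (β j) i‖ ^ 2) ∧
      ∑' j, (∑' i, t i * ‖b.repr (β j) i‖ ^ 2) = ∑' i, t i := by
  set F : ι × κ → ℝ := fun p => t p.1 * ‖b.repr (β p.2) p.1‖ ^ 2 with hF_def
  have key : ∀ i j, ‖b.repr (β j) i‖ = ‖β.repr (b i) j‖ := by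
    intro i j
    rw [b.repr_apply_apply, β.repr_apply_apply, norm_inner_symm]
  have hrow : ∀ i, Summable fun j => F (i, j) := by
    intro i
    simp only [hF_def, key]
    exact (summable_sq_of_lp (β.repr (b i))).mul_left (t i)
  have hrowsum : ∀ i, (∑' j, F (i, j)) = t i := by
    intro i
    simp only [hF_def, key]
    rw [tsum_mul_left, tsum_parseval, b.orthonormal.1 i]
    norm_num
  have hF : Summable F := by
    rw [summable_prod_of_nonneg (fun p => mul_nonneg (h0 p.1) (sq_nonneg _))]
    refine ⟨hrow, ?_⟩
    simp only [hrowsum]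
    exact hsum.congr fun i => (hrowsum i).symm
  have hcol : Summable (fun j => ∑' i, F (i, j)) := by
    have := (summable_prod_of_nonneg (f := F ∘ Prod.swap)
      (fun p => mul_nonneg (h0 p.2) (sq_nonneg _))).mp hF.prod_symm
    exact this.2
  refine ⟨hcol, ?_⟩
  have hswap : ∑' j, (∑' i, F (i, j)) = ∑' i, (∑' j, F (i, j)) := by
    refine Summable.tsum_comm' hF hrow fun j => ?_
    exact ((summable_prod_of_nonneg (f := F ∘ Prod.swap)
      (fun p => mul_nonneg (h0 p.2) (sq_nonneg _))).mp hF.prod_symm).1 j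
  rw [hswap]
  simp only [hrowsum]

end core

section sqrt
variable {E : Type*} [NormedAddCommGroup E] [InnerProductSpace ℂ E] [CompleteSpace E]

set_option synthInstance.maxHeartbeats 1000000 in
set_option maxHeartbeats 1000000 in
lemma cfc_sqrt_eq (a : E →L[ℂ] E) (ha : 0 ≤ a) : cfc Real.sqrt a = CFC.sqrt a := by
  rw [CFC.sqrt_eq_cfc, cfc_nnreal_eq_real _ a ha]
  exact cfc_congr fun x _ => by rw [Real.sqrt]

set_option synthInstance.maxHeartbeats 1000000 in
set_option maxHeartbeats 1000000 in
lemma sqrt_unique' (a p : E →L[ℂ] E) (h : p * p = a) (hp : 0 ≤ p) :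
    cfc Real.sqrt a = p := by
  have ha : 0 ≤ a := h ▸ (by
    have hsa : IsSelfAdjoint p := by
      rw [ContinuousLinearMap.nonneg_iff_isPositive] at hp
      exact hp.isSelfAdjoint
    simpa [hsa.star_eq] using star_mul_self_nonneg p)
  rw [cfc_sqrt_eq a ha]
  exact CFC.sqrt_unique h hp

end sqrt
end S19


/- STATEMENT 19 (Theorem `aa`: the Kähler potential of the complexified orbit in
terms of the eigenvalues `a_i²` of `A*A`): for a Hilbert–Schmidt `A : E → F` and an
orthonormal (Hilbert) basis `(e_i)` of `E` of eigenvectors of `A*A` with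
`A*A e_i = a_i²·e_i`, `a_i ≥ 0`, the operator `(Id + A*A)^{1/2} − Id` is trace class,
the family `(√(1 + a_i²) − 1)_i` is summable, and
`Tr((Id + A*A)^{1/2} − Id) = Σ_i (√(1 + a_i²) − 1)`. -/
open Paper ContinuousLinearMap in
theorem statement19
    (E : Type) [NormedAddCommGroup E] [InnerProductSpace ℂ E] [CompleteSpace E]
    [TopologicalSpace.SeparableSpace E]
    (F : Type) [NormedAddCommGroup F] [InnerProductSpace ℂ F] [CompleteSpace F]
    (A : E →L[ℂ] F) (hA : IsHS A)
    (I : Type) (b : HilbertBasis I ℂ E)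
    (a : I → ℝ) (ha : ∀ i, 0 ≤ a i)
    (heig : ∀ i, (adjoint A ∘L A) (b i) = (((a i) ^ 2 : ℝ) : ℂ) • b i) :
    IsTC (cfcR Real.sqrt ((1 : E →L[ℂ] E) + adjoint A ∘L A) - (1 : E →L[ℂ] E)) ∧
    Summable (fun i => Real.sqrt (1 + (a i) ^ 2) - 1) ∧
    trace (cfcR Real.sqrt ((1 : E →L[ℂ] E) + adjoint A ∘L A) - (1 : E →L[ℂ] E)) =
      ((∑' i, (Real.sqrt (1 + (a i) ^ 2) - 1) : ℝ) : ℂ) := by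
  classical
  set T := adjoint A ∘L A with hT
  have hb1 : ∀ i, ‖b i‖ = 1 := fun i => b.orthonormal.1 i
  -- each a i ^ 2 equals ‖A (b i)‖ ^ 2
  have hnorm : ∀ i, ‖A (b i)‖ ^ 2 = a i ^ 2 := by
    intro i
    have h1 : (inner ℂ (A (b i)) (A (b i)) : ℂ) = ((a i ^ 2 : ℝ) : ℂ) := by
      rw [← ContinuousLinearMap.adjoint_inner_right]
      rw [show adjoint A (A (b i)) = (((a i) ^ 2 : ℝ) : ℂ) • b i from heig i]
      rw [inner_smul_right, inner_self_eq_norm_sq_to_K, hb1]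
      norm_num
    rw [inner_self_eq_norm_sq_to_K] at h1
    norm_cast at h1
    exact RCLike.ofReal_injective (K := ℂ) h1
  -- summability of the eigenvalues, using that `A` is Hilbert–Schmidt
  have binj : Function.Injective ⇑b := b.orthonormal.linearIndependent.injective
  have hsumA : Summable fun i => a i ^ 2 := by
    let e : I ≃ Set.range ⇑b := Equiv.ofInjective ⇑b binj
    have hval : ∀ i : I, ((e i : Set.range ⇑b) : E) = b i := fun i => rfl
    have hon : Orthonormal ℂ ((↑) : Set.range ⇑b → E) := by
      have h2 : ((↑) : Set.range ⇑b → E) = ⇑b ∘ ⇑e.symm := by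
        funext x
        calc (x : E) = ((e (e.symm x) : Set.range ⇑b) : E) := by rw [e.apply_symm_apply]
          _ = _ := hval _
      rw [h2]
      exact b.orthonormal.comp _ e.symm.injective
    have hsp : ⊤ ≤ (Submodule.span ℂ
        (Set.range ((↑) : Set.range ⇑b → E))).topologicalClosure := by
      rw [Subtype.range_coe]
      exact b.dense_span.ge
    have hsum' := hA (Set.range ⇑b) (HilbertBasis.mk hon hsp)
    have h3 : Summable ((fun j => ‖A ((HilbertBasis.mk hon hsp) j)‖ ^ 2) ∘ ⇑e) :=
      (Equiv.summable_iff e).mpr hsum'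
    refine h3.congr fun i => ?_
    have h4 : (HilbertBasis.mk hon hsp) (e i) = b i := by
      rw [HilbertBasis.coe_mk]
      exact hval i
    rw [Function.comp_apply, h4, hnorm]
  set M := ∑' i, a i ^ 2 with hM_def
  have hM0 : 0 ≤ M := tsum_nonneg fun i => sq_nonneg _
  have hM : ∀ i, a i ^ 2 ≤ M := fun i => Summable.le_tsum hsumA i fun j _ => sq_nonneg _
  set s : I → ℝ := fun i => Real.sqrt (1 + a i ^ 2) - 1 with hs_def
  set c : I → ℝ := fun i => Real.sqrt (1 + a i ^ 2) with hc_def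
  set u : I → ℝ := fun i => Real.sqrt (s i) with hu_def
  have hs0 : ∀ i, 0 ≤ s i := by
    intro i
    have hy := Real.sq_sqrt (show (0:ℝ) ≤ 1 + a i ^ 2 by positivity)
    have hy0 := Real.sqrt_nonneg (1 + a i ^ 2)
    simp only [hs_def]
    nlinarith [sq_nonneg (a i)]
  have hcs : ∀ i, c i = 1 + s i := fun i => by simp [hs_def, hc_def]
  have hsle : ∀ i, s i ≤ a i ^ 2 := by
    intro i
    have h := Real.sqrt_le_sqrt (show 1 + a i ^ 2 ≤ (1 + a i ^ 2) ^ 2 by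
      nlinarith [sq_nonneg (a i)])
    rw [Real.sqrt_sq (by positivity)] at h
    simp only [hs_def]
    linarith
  have hssum : Summable s := hsumA.of_nonneg_of_le hs0 hsle
  have hC : (0:ℝ) ≤ 1 + M := by linarith
  have hts : ∀ i, |s i| ≤ 1 + M := fun i => by
    rw [abs_of_nonneg (hs0 i)]
    have := hsle i; have := hM i; linarith
  have htc : ∀ i, |c i| ≤ 1 + M := fun i => by
    rw [abs_of_nonneg (Real.sqrt_nonneg _)]
    have h1 := hcs i; have := hsle i; have := hM i
    simp only [hc_def] at h1 ⊢
    linarith [hs0 i]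
  have htu : ∀ i, |u i| ≤ 1 + M := fun i => by
    rw [abs_of_nonneg (Real.sqrt_nonneg _)]
    have h1 : u i * u i = s i := Real.mul_self_sqrt (hs0 i)
    have h2 : s i ≤ M := le_trans (hsle i) (hM i)
    nlinarith [Real.sqrt_nonneg (s i)]
  set S := S19.diag b s hC hts with hS_def
  set P := S19.diag b c hC htc with hP_def
  set R := S19.diag b u hC htu with hR_def
  have hP1 : P = 1 + S := by
    refine S19.ext_basis b fun i => ?_
    rw [hP_def, hS_def, S19.diag_apply_basis, ContinuousLinearMap.add_apply,
      ContinuousLinearMap.one_apply, S19.diag_apply_basis]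
    have h1 : ((c i : ℝ) : ℂ) = 1 + ((s i : ℝ) : ℂ) := by
      rw [hcs i]; push_cast; ring
    rw [h1, add_smul, one_smul]
  have hPP : P * P = 1 + T := by
    refine S19.ext_basis b fun i => ?_
    rw [ContinuousLinearMap.mul_apply, hP_def, S19.diag_apply_basis, map_smul,
      S19.diag_apply_basis, smul_smul, ContinuousLinearMap.add_apply,
      ContinuousLinearMap.one_apply, hT, heig i]
    have h1 : ((c i : ℝ) : ℂ) * ((c i : ℝ) : ℂ) = 1 + ((a i ^ 2 : ℝ) : ℂ) := by
      have := Real.mul_self_sqrt (show (0:ℝ) ≤ 1 + a i ^ 2 by positivity)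
      simp only [hc_def]
      push_cast [this]
      norm_cast
    rw [h1, add_smul, one_smul]
  have hRR : R ∘L R = S := by
    refine S19.ext_basis b fun i => ?_
    rw [ContinuousLinearMap.comp_apply, hR_def, hS_def, S19.diag_apply_basis, map_smul,
      S19.diag_apply_basis, smul_smul]
    have h1 : ((u i : ℝ) : ℂ) * ((u i : ℝ) : ℂ) = ((s i : ℝ) : ℂ) := by
      have := Real.mul_self_sqrt (hs0 i)
      push_cast [this]
      norm_cast
    rw [h1, S19.diag_apply_basis]
  have hPpos : 0 ≤ P := S19.nonneg_diag b c hC htc fun i => Real.sqrt_nonneg _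
  have hsqrt : cfcR Real.sqrt ((1 : E →L[ℂ] E) + T) = P := by
    have h1 : cfcR Real.sqrt ((1 : E →L[ℂ] E) + T)
        = cfc Real.sqrt ((1 : E →L[ℂ] E) + T) := rfl
    rw [h1]
    exact S19.sqrt_unique' _ P hPP hPpos
  have hop : cfcR Real.sqrt ((1 : E →L[ℂ] E) + T) - 1 = S := by
    rw [hsqrt, hP1, add_sub_cancel_left]
  have hHS : IsHS R := by
    intro K β
    have hterm : ∀ j, ‖R (β j)‖ ^ 2 = ∑' i, s i * ‖b.repr (β j) i‖ ^ 2 := by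
      intro j
      rw [hR_def, S19.norm_diag_sq]
      exact tsum_congr fun i => by rw [hu_def, Real.sq_sqrt (hs0 i)]
    have h1 := (S19.core b β s hs0 hssum).1
    exact h1.congr fun j => (hterm j).symm
  refine ⟨⟨R, R, hHS, hHS, ?_⟩, hssum, ?_⟩
  · rw [hop, hRR]
  · rw [hop]
    have hg := S19.core b (stdHB E) s hs0 hssum
    have h1 : trace S = ∑' j : basisIndex E,
        (inner ℂ ((stdHB E) j) (S ((stdHB E) j)) : ℂ) := rfl
    have h2 : ∀ j : basisIndex E, (inner ℂ ((stdHB E) j) (S ((stdHB E) j)) : ℂ)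
        = ((∑' i, s i * ‖b.repr ((stdHB E) j) i‖ ^ 2 : ℝ) : ℂ) := fun j =>
      S19.inner_diag_self b s hC hts ((stdHB E) j)
    rw [h1, tsum_congr h2, ← Complex.ofReal_tsum, hg.2]
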